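/- The lazy potential satisfies the 3-competitiveness update condition for a cryptic move of HARMONIC with two servers: let (M,d) be a metric space and let x, y, z, r ∈ M be pairwise distinct. Then Φ(x,y,z) + 3·d(y,r) − Φ(x,r,z) ≥ 0, where Φ(u,v,w) := 2·d(u,v)·(2·d(u,w)+d(v,w))/(d(u,v)+d(u,w)+d(v,w)). -/

import Mathlib

/-!
Clearing the two denominators turns the claim into a polynomial inequality in the six distances
between `x, y, z, r`. Five triangle inequalities suffice: the polynomial is a sum of products of
distances, each multiplied by at most one triangle-inequality slack.
-/

/-- The lazy potential for HARMONIC with two servers: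
`Φ(u,v,w) = 2·d(u,v)·(2·d(u,w) + d(v,w)) / (d(u,v) + d(u,w) + d(v,w))`. -/
noncomputable def lazyPhi {M : Type*} [MetricSpace M] (u v w : M) : ℝ :=
  2 * dist u v * (2 * dist u w + dist v w) / (dist u v + dist u w + dist v w)

/-- With `a = d(x,y)`, `b = d(x,z)`, `c = d(y,z)`, `p = d(x,r)`, `q = d(r,z)`, `t = d(y,r)`. -/
lemma cryptic_move_cross_mul {a b c p q t : ℝ} (ha : 0 ≤ a) (hb : 0 ≤ b) (hc : 0 ≤ c)
    (hp : 0 ≤ p) (hq : 0 ≤ q) (ht : 0 ≤ t)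
    (hxr : p ≤ a + t) (hxz : b ≤ a + c) (hxz' : b ≤ p + q) (hyz : c ≤ t + q)
    (hrz : q ≤ t + c) :
    2 * p * (2 * b + q) * (a + b + c) ≤ (2 * a * (2 * b + c) + 3 * t * (a + b + c)) * (p + b + q) := by
  have sxr : 0 ≤ a + t - p := by linarith
  have sxz : 0 ≤ a + c - b := by linarith
  have sxz' : 0 ≤ p + q - b := by linarith
  have syz : 0 ≤ t + q - c := by linarith
  have srz : 0 ≤ t + c - q := by linarith
  have certificate : (2 * a * (2 * b + c) + 3 * t * (a + b + c)) * (p + b + q)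
        - 2 * p * (2 * b + q) * (a + b + c)
      = (4 * b * b + 3 * b * c + 3 * b * q + 2 * c * q) * (a + t - p) + b * t * (a + c - b)
        + c * t * (p + q - b) + (a * b + b * p) * (t + q - c) + 2 * a * p * (t + c - q)
        + 2 * c * p * t + 2 * b * p * t + 3 * a * q * t + a * p * t + a * b * t := by
    ring
  have : 0 ≤ (2 * a * (2 * b + c) + 3 * t * (a + b + c)) * (p + b + q)
      - 2 * p * (2 * b + q) * (a + b + c) := by
    rw [certificate]
    positivity
  linarith

theorem lazyPhi_cryptic_move_general {M : Type*} [MetricSpace M] (x y z r : M)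
    (hxy : x ≠ y) (hxr : x ≠ r) :
    lazyPhi x y z + 3 * dist y r - lazyPhi x r z ≥ 0 := by
  have hA : 0 < dist x y + dist x z + dist y z := by
    have := dist_pos.2 hxy
    positivity
  have hB : 0 < dist x r + dist x z + dist r z := by
    have := dist_pos.2 hxr
    positivity
  have cross := cryptic_move_cross_mul dist_nonneg dist_nonneg dist_nonneg dist_nonneg
    dist_nonneg dist_nonneg (dist_triangle x y r) (dist_triangle x y z) (dist_triangle x r z)
    (dist_triangle y r z) (dist_triangle_left r z y)
  refine sub_nonneg.2 ?_
  rw [lazyPhi, lazyPhi, div_add' _ _ _ hA.ne', div_le_div_iff₀ hB hA]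
  linarith

/-- Update condition of the lazy potential for a cryptic move of HARMONIC with
two servers: the algorithm's servers are at `x, z`, the adversary's at `y, z`;
the adversary relocates its open server from `y` to `r` without a request. -/
theorem lazyPhi_cryptic_move {M : Type*} [MetricSpace M] (x y z r : M)
    (hxy : x ≠ y) (hxz : x ≠ z) (hxr : x ≠ r)
    (hyz : y ≠ z) (hyr : y ≠ r) (hzr : z ≠ r) :
    lazyPhi x y z + 3 * dist y r - lazyPhi x r z ≥ 0 :=
  lazyPhi_cryptic_move_general x y z r hxy hxr
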